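/- Let Q = Q₁ × ⋯ × Qₙ be a product probability measure on a product X = ∏ᵢ Xᵢ of Polish spaces and let P be a probability measure on X. For coefficients c_S ≥ 0 indexed by subsets S ⊆ [n] with Σ_{S ∋ i} c_S ≤ 1 for every i, one has Σ_{S ⊆ [n]} c_S · D(P_S ‖ Q_S) ≤ D(P ‖ Q), where P_S, Q_S denote the marginals on ∏_{i∈S} Xᵢ. -/

import Mathlib

open MeasureTheory ENNReal Real

noncomputable section

open Classical in
/-- Relative entropy (Kullback–Leibler divergence) `D(P‖Q)`, valued in `[0,∞]`. -/
def KLdiv {α : Type*} [MeasurableSpace α] (P Q : Measure α) : ℝ≥0∞ :=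
  if P ≪ Q ∧ Integrable (llr P Q) P then ENNReal.ofReal (∫ x, llr P Q x ∂P) else ⊤

/-- Marginal of a measure on a product on the coordinates in `S`. -/
def marginal {n : ℕ} {X : Fin n → Type*} [∀ i, MeasurableSpace (X i)]
    (P : Measure (∀ i, X i)) (S : Finset (Fin n)) : Measure (∀ i : S, X i) :=
  Measure.map (fun x (i : S) => x i) P

end

/-!
If `D(P ‖ Q) < ∞`, every marginal divergence is finite by the data processing inequality.
The test function `f = ∑_S c_S · log (dP_S/dQ_S) ∘ π_S` satisfies
`e^f = ∏_S (dP_S/dQ_S ∘ π_S)^{c_S}` `P`-a.e., and by Finner's inequality (Hölder's inequality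
applied one coordinate at a time, which is where `∑_{S ∋ i} c_S ≤ 1` enters) its `Q`-integral is
at most `∏_S (∫ dP_S/dQ_S dQ_S)^{c_S} = 1`. The Donsker–Varadhan bound `∫ f dP ≤ D(P ‖ Q)` is
then the claim.
-/

section Gibbs

variable {α : Type*} [MeasurableSpace α]

lemma integral_nonpos_of_lintegral_exp_le_one {ν : Measure α} [IsProbabilityMeasure ν]
    {g : α → ℝ} (hg : Integrable g ν) (h : ∫⁻ x, ENNReal.ofReal (exp (g x)) ∂ν ≤ 1) :
    ∫ x, g x ∂ν ≤ 0 := by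
  have hexp_int : Integrable (fun x => exp (g x)) ν :=
    ⟨continuous_exp.comp_aestronglyMeasurable hg.aestronglyMeasurable,
      (hasFiniteIntegral_iff_ofReal (ae_of_all _ fun x => (exp_pos _).le)).mpr
        (h.trans_lt one_lt_top)⟩
  have hexp_le : ∫ x, exp (g x) ∂ν ≤ 1 := by
    rw [integral_eq_lintegral_of_nonneg_ae (ae_of_all _ fun x => (exp_pos _).le)
      hexp_int.aestronglyMeasurable]
    exact ENNReal.toReal_le_of_le_ofReal zero_le_one (by simpa using h)
  calc ∫ x, g x ∂ν ≤ ∫ x, (exp (g x) - 1) ∂ν :=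
        integral_mono hg (hexp_int.sub (integrable_const 1)) fun x => by
          linarith [add_one_le_exp (g x)]
    _ ≤ 0 := by
        rw [integral_sub hexp_int (integrable_const 1)]
        simp only [integral_const, probReal_univ, smul_eq_mul, one_mul]
        linarith

/-- Donsker–Varadhan: `∫ e^(f - llr P μ) dP ≤ ∫ G dμ ≤ 1`, and `t ≤ e^t - 1`. -/
lemma integral_le_integral_llr {P μ : Measure α} [IsProbabilityMeasure P] [SigmaFinite μ]
    (hPμ : P ≪ μ) (hllr : Integrable (llr P μ) P) {f : α → ℝ} (hf : Integrable f P)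
    {G : α → ℝ≥0∞} (hG : Measurable G) (hfG : ∀ᵐ x ∂P, ENNReal.ofReal (exp (f x)) ≤ G x)
    (hGμ : ∫⁻ x, G x ∂μ ≤ 1) :
    ∫ x, f x ∂P ≤ ∫ x, llr P μ x ∂P := by
  have hexp : ∫⁻ x, ENNReal.ofReal (exp (f x - llr P μ x)) ∂P ≤ 1 :=
    calc ∫⁻ x, ENNReal.ofReal (exp (f x - llr P μ x)) ∂P
        ≤ ∫⁻ x, G x / P.rnDeriv μ x ∂P := by
          refine lintegral_mono_ae ?_
          filter_upwards [hfG, Measure.rnDeriv_pos hPμ,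
            hPμ.ae_le (Measure.rnDeriv_lt_top P μ)] with x hx hpos hfin
          rw [llr, exp_sub, exp_log (ENNReal.toReal_pos hpos.ne' hfin.ne),
            ENNReal.ofReal_div_of_pos (ENNReal.toReal_pos hpos.ne' hfin.ne),
            ENNReal.ofReal_toReal hfin.ne]
          exact ENNReal.div_le_div_right hx _
      _ = ∫⁻ x, P.rnDeriv μ x * (G x / P.rnDeriv μ x) ∂μ :=
          (lintegral_rnDeriv_mul hPμ
            (hG.div (Measure.measurable_rnDeriv P μ)).aemeasurable).symm
      _ ≤ ∫⁻ x, G x ∂μ := lintegral_mono fun x => ENNReal.mul_div_le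
      _ ≤ 1 := hGμ
  have hnonpos := integral_nonpos_of_lintegral_exp_le_one
    (g := fun x => f x - llr P μ x) (hf.sub hllr) hexp
  rw [integral_sub hf hllr] at hnonpos
  linarith

lemma integral_llr_nonneg {P μ : Measure α} [IsProbabilityMeasure P] [IsProbabilityMeasure μ]
    (hPμ : P ≪ μ) (hllr : Integrable (llr P μ) P) : 0 ≤ ∫ x, llr P μ x ∂P := by
  simpa using InformationTheory.integral_llr_add_sub_measure_univ_nonneg hPμ hllr

end Gibbs

section Finner

theorem lintegral_prod_rpow_le_of_sum_le_one {α ι : Type*} [MeasurableSpace α] {μ : Measure α}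
    [IsProbabilityMeasure μ] (s : Finset ι) {f : ι → α → ℝ≥0∞}
    (hf : ∀ i ∈ s, AEMeasurable (f i) μ) {p : ι → ℝ} (hp : ∑ i ∈ s, p i ≤ 1)
    (h2p : ∀ i ∈ s, 0 ≤ p i) :
    ∫⁻ a, ∏ i ∈ s, f i a ^ p i ∂μ ≤ ∏ i ∈ s, (∫⁻ a, f i a ∂μ) ^ p i := by
  classical
  -- pad the family with the constant `1`, carrying the missing weight `1 - ∑ p`
  let g : Option ι → α → ℝ≥0∞ := fun o => o.elim (fun _ => 1) f
  let q : Option ι → ℝ := fun o => o.elim (1 - ∑ i ∈ s, p i) p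
  have hnone : none ∉ s.map Function.Embedding.some := by simp
  have key := ENNReal.lintegral_prod_norm_pow_le (μ := μ) (Finset.cons none _ hnone) (f := g)
    (p := q) (by simpa [g] using hf) (by simp [q]) (by simpa [q] using ⟨hp, h2p⟩)
  simpa [g, q] using key

variable {ι : Type*} [DecidableEq ι] {X : ι → Type*} [∀ i, MeasurableSpace (X i)]
  (Q : ∀ i, Measure (X i))

lemma DependsOn.lmarginal {f : (∀ i, X i) → ℝ≥0∞} {S : Set ι} (hf : DependsOn f S)
    (T : Finset ι) : DependsOn (∫⋯∫⁻_T, f ∂Q) (S \ T) := by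
  intro x y hxy
  refine lintegral_congr fun z => hf fun i hi => ?_
  by_cases hiT : i ∈ T
  · simp [Function.updateFinset, hiT]
  · simp [Function.updateFinset, hiT, hxy i ⟨hi, hiT⟩]

lemma lmarginal_prod_rpow_le [Fintype ι] [∀ i, IsProbabilityMeasure (Q i)]
    {F : Finset ι → (∀ i, X i) → ℝ≥0∞} (hFm : ∀ S, Measurable (F S))
    (hFdep : ∀ S, DependsOn (F S) S) {c : Finset ι → ℝ} (hc : ∀ S, 0 ≤ c S)
    (hci : ∀ i, ∑ S ∈ Finset.univ.filter (fun S => i ∈ S), c S ≤ 1) (T : Finset ι)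
    (x : ∀ i, X i) :
    (∫⋯∫⁻_T, (fun x => ∏ S, F S x ^ c S) ∂Q) x ≤ ∏ S, ((∫⋯∫⁻_T, F S ∂Q) x) ^ c S := by
  induction T using Finset.induction_on generalizing x with
  | empty => simp
  | @insert i T hi ih =>
    set A := Finset.univ.filter (fun S : Finset ι => i ∈ S)
    set H : Finset ι → (∀ i, X i) → ℝ≥0∞ := fun S => ∫⋯∫⁻_T, F S ∂Q
    have hHm : ∀ S, Measurable (H S) := fun S => (hFm S).lmarginal Q
    have hH_update : ∀ S ∉ A, ∀ y, H S (Function.update x i y) = H S x := by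
      intro S hS y
      refine (hFdep S).lmarginal Q T fun j hj => ?_
      have hji : j ≠ i := by rintro rfl; simp [A] at hS; exact hS hj.1
      simp [hji]
    have hH_insert : ∀ S, (∫⋯∫⁻_insert i T, F S ∂Q) x
        = ∫⁻ y, H S (Function.update x i y) ∂Q i := fun S => lmarginal_insert _ (hFm S) hi x
    calc (∫⋯∫⁻_insert i T, (fun x => ∏ S, F S x ^ c S) ∂Q) x
        ≤ ∫⁻ y, ∏ S, H S (Function.update x i y) ^ c S ∂Q i := by
          rw [lmarginal_insert _ (by fun_prop) hi]
          exact lintegral_mono fun y => ih _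
      _ = ∫⁻ y, (∏ S ∈ Aᶜ, H S x ^ c S) * ∏ S ∈ A, H S (Function.update x i y) ^ c S ∂Q i := by
          refine lintegral_congr fun y => ?_
          rw [← Finset.prod_compl_mul_prod A]
          congr 1
          exact Finset.prod_congr rfl fun S hS => by rw [hH_update S (Finset.mem_compl.mp hS)]
      _ = (∏ S ∈ Aᶜ, H S x ^ c S) * ∫⁻ y, ∏ S ∈ A, H S (Function.update x i y) ^ c S ∂Q i :=
          lintegral_const_mul _ (by fun_prop)
      _ ≤ (∏ S ∈ Aᶜ, H S x ^ c S) * ∏ S ∈ A, (∫⁻ y, H S (Function.update x i y) ∂Q i) ^ c S := by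
          gcongr
          exact lintegral_prod_rpow_le_of_sum_le_one A (fun S _ => by fun_prop) (hci i)
            fun S _ => hc S
      _ = ∏ S, ((∫⋯∫⁻_insert i T, F S ∂Q) x) ^ c S := by
          rw [← Finset.prod_compl_mul_prod A]
          congr 1 <;> refine Finset.prod_congr rfl fun S hS => ?_
          · simp [hH_insert, hH_update S (Finset.mem_compl.mp hS)]
          · rw [hH_insert]

/-- **Finner's inequality** for a product of probability measures. -/
theorem lintegral_prod_rpow_le_of_dependsOn [Fintype ι] [∀ i, IsProbabilityMeasure (Q i)]
    {F : Finset ι → (∀ i, X i) → ℝ≥0∞} (hFm : ∀ S, Measurable (F S))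
    (hFdep : ∀ S, DependsOn (F S) S) {c : Finset ι → ℝ} (hc : ∀ S, 0 ≤ c S)
    (hci : ∀ i, ∑ S ∈ Finset.univ.filter (fun S => i ∈ S), c S ≤ 1) :
    ∫⁻ x, ∏ S, F S x ^ c S ∂Measure.pi Q ≤ ∏ S, (∫⁻ x, F S x ∂Measure.pi Q) ^ c S := by
  obtain ⟨x₀⟩ := (Measure.pi Q).nonempty_of_neZero
  simpa only [lintegral_eq_lmarginal_univ x₀] using
    lmarginal_prod_rpow_le Q hFm hFdep hc hci Finset.univ x₀

end Finner

lemma KLdiv_of_ac_of_integrable {α : Type*} [MeasurableSpace α] {P Q : Measure α} (hPQ : P ≪ Q)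
    (hllr : Integrable (llr P Q) P) : KLdiv P Q = ENNReal.ofReal (∫ x, llr P Q x ∂P) := by
  rw [KLdiv, if_pos ⟨hPQ, hllr⟩]

lemma ofReal_exp_sum_mul_log_toReal {ι : Type*} (s : Finset ι) {a : ι → ℝ≥0∞}
    (ha : ∀ i ∈ s, a i ≠ 0 ∧ a i ≠ ∞) (c : ι → ℝ) :
    ENNReal.ofReal (exp (∑ i ∈ s, c i * log (a i).toReal)) = ∏ i ∈ s, a i ^ c i := by
  rw [exp_sum, ENNReal.ofReal_prod_of_nonneg fun i _ => (exp_pos _).le]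
  refine Finset.prod_congr rfl fun i hi => ?_
  have hpos := ENNReal.toReal_pos (ha i hi).1 (ha i hi).2
  rw [mul_comm, ← rpow_def_of_pos hpos, ← ENNReal.ofReal_rpow_of_pos hpos,
    ENNReal.ofReal_toReal (ha i hi).2]

section Marginal

variable {n : ℕ} {X : Fin n → Type*} [∀ i, MeasurableSpace (X i)]

lemma marginal_eq_map_restrict (P : Measure (∀ i, X i)) (S : Finset (Fin n)) :
    marginal P S = P.map S.restrict := rfl

instance isProbabilityMeasure_marginal (P : Measure (∀ i, X i)) [IsProbabilityMeasure P]
    (S : Finset (Fin n)) : IsProbabilityMeasure (marginal P S) :=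
  Measure.isProbabilityMeasure_map (S.measurable_restrict).aemeasurable

lemma absolutelyContinuous_marginal {P μ : Measure (∀ i, X i)} (hPμ : P ≪ μ)
    (S : Finset (Fin n)) : marginal P S ≪ marginal μ S :=
  hPμ.map S.measurable_restrict

lemma integrable_llr_marginal {P μ : Measure (∀ i, X i)} [IsFiniteMeasure P] [IsFiniteMeasure μ]
    (hPμ : P ≪ μ) (hllr : Integrable (llr P μ) P) (S : Finset (Fin n)) :
    Integrable (llr (marginal P S) (marginal μ S)) (marginal P S) :=
  InformationTheory.integrable_llr_map hPμ S.measurable_restrict hllr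

theorem sum_mul_integral_llr_marginal_le (Q : ∀ i, Measure (X i))
    [∀ i, IsProbabilityMeasure (Q i)] (P : Measure (∀ i, X i)) [IsProbabilityMeasure P]
    (hPQ : P ≪ Measure.pi Q) (hllr : Integrable (llr P (Measure.pi Q)) P)
    (c : Finset (Fin n) → ℝ) (hc : ∀ S, 0 ≤ c S)
    (hci : ∀ i, ∑ S ∈ Finset.univ.filter (fun S : Finset (Fin n) => i ∈ S), c S ≤ 1) :
    ∑ S, c S * ∫ y, llr (marginal P S) (marginal (Measure.pi Q) S) y ∂marginal P S
      ≤ ∫ x, llr P (Measure.pi Q) x ∂P := by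
  set μ := Measure.pi Q
  let F : Finset (Fin n) → (∀ i, X i) → ℝ≥0∞ :=
    fun S x => (marginal P S).rnDeriv (marginal μ S) (S.restrict x)
  have hFm : ∀ S, Measurable (F S) :=
    fun S => (Measure.measurable_rnDeriv _ _).comp S.measurable_restrict
  have hF_pos_finite : ∀ᵐ x ∂P, ∀ S, F S x ≠ 0 ∧ F S x ≠ ∞ := by
    refine ae_all_iff.2 fun S => ?_
    have hPQ_S := absolutelyContinuous_marginal hPQ S
    have hdensity : ∀ᵐ y ∂marginal P S, (marginal P S).rnDeriv (marginal μ S) y ≠ 0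
        ∧ (marginal P S).rnDeriv (marginal μ S) y ≠ ∞ := by
      filter_upwards [Measure.rnDeriv_pos hPQ_S,
        hPQ_S.ae_le (Measure.rnDeriv_lt_top (marginal P S) (marginal μ S))]
        with y hpos hfin using ⟨hpos.ne', hfin.ne⟩
    exact ae_of_ae_map S.measurable_restrict.aemeasurable hdensity
  have hF_mass : ∀ S, ∫⁻ x, F S x ∂μ = 1 := fun S => by
    rw [← lintegral_map (Measure.measurable_rnDeriv _ _) S.measurable_restrict,
      ← marginal_eq_map_restrict, Measure.lintegral_rnDeriv (absolutelyContinuous_marginal hPQ S),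
      measure_univ]
  have hllr_comp : ∀ S, Integrable
      (fun x => llr (marginal P S) (marginal μ S) (S.restrict x)) P := fun S =>
    (integrable_llr_marginal hPQ hllr S).comp_measurable S.measurable_restrict
  calc ∑ S, c S * ∫ y, llr (marginal P S) (marginal μ S) y ∂marginal P S
      = ∫ x, ∑ S, c S * llr (marginal P S) (marginal μ S) (S.restrict x) ∂P := by
        rw [integral_finsetSum _ fun S _ => (hllr_comp S).const_mul _]
        refine Finset.sum_congr rfl fun S _ => ?_
        rw [integral_const_mul, marginal_eq_map_restrict P S,
          integral_map S.measurable_restrict.aemeasurable (measurable_llr _ _).aestronglyMeasurable]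
    _ ≤ ∫ x, llr P μ x ∂P := by
        refine integral_le_integral_llr hPQ hllr
          (integrable_finsetSum _ fun S _ => (hllr_comp S).const_mul _)
          (G := fun x => ∏ S, F S x ^ c S) (by fun_prop) ?_ ?_
        · filter_upwards [hF_pos_finite] with x hx
          exact (ofReal_exp_sum_mul_log_toReal _ (fun S _ => hx S) c).le
        · calc ∫⁻ x, ∏ S, F S x ^ c S ∂μ ≤ ∏ S, (∫⁻ x, F S x ∂μ) ^ c S :=
                lintegral_prod_rpow_le_of_dependsOn Q hFm
                  (fun S x y hxy => congrArg ((marginal P S).rnDeriv (marginal μ S))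
                    (funext fun i : S => hxy i i.2)) hc hci
            _ = 1 := by simp [hF_mass]

end Marginal

theorem shearer_relative_entropy_general {n : ℕ} {X : Fin n → Type*}
    [∀ i, MeasurableSpace (X i)]
    (Q : ∀ i, Measure (X i)) [∀ i, IsProbabilityMeasure (Q i)]
    (P : Measure (∀ i, X i)) [IsProbabilityMeasure P]
    (c : Finset (Fin n) → ℝ) (hc : ∀ S, 0 ≤ c S)
    (hci : ∀ i : Fin n,
      ∑ S ∈ Finset.univ.filter (fun S : Finset (Fin n) => i ∈ S), c S ≤ 1) :
    ∑ S : Finset (Fin n), ENNReal.ofReal (c S) * KLdiv (marginal P S) (marginal (Measure.pi Q) S)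
      ≤ KLdiv P (Measure.pi Q) := by
  by_cases hfin : P ≪ Measure.pi Q ∧ Integrable (llr P (Measure.pi Q)) P
  · obtain ⟨hPQ, hllr⟩ := hfin
    have hPQ_S := absolutelyContinuous_marginal hPQ
    have hllr_S := integrable_llr_marginal hPQ hllr
    calc ∑ S, ENNReal.ofReal (c S) * KLdiv (marginal P S) (marginal (Measure.pi Q) S)
        = ENNReal.ofReal (∑ S, c S *
            ∫ y, llr (marginal P S) (marginal (Measure.pi Q) S) y ∂marginal P S) := by
          rw [ENNReal.ofReal_sum_of_nonneg fun S _ =>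
            mul_nonneg (hc S) (integral_llr_nonneg (hPQ_S S) (hllr_S S))]
          simp only [KLdiv_of_ac_of_integrable (hPQ_S _) (hllr_S _), ENNReal.ofReal_mul (hc _)]
      _ ≤ KLdiv P (Measure.pi Q) := by
          rw [KLdiv_of_ac_of_integrable hPQ hllr]
          exact ENNReal.ofReal_le_ofReal (sum_mul_integral_llr_marginal_le Q P hPQ hllr c hc hci)
  · rw [KLdiv, if_neg hfin]
    exact le_top

/-- Shearer's inequality for relative entropy with respect to a product measure. -/
theorem shearer_relative_entropy {n : ℕ} {X : Fin n → Type*}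
    [∀ i, TopologicalSpace (X i)] [∀ i, PolishSpace (X i)]
    [∀ i, MeasurableSpace (X i)] [∀ i, BorelSpace (X i)]
    (Q : ∀ i, Measure (X i)) [∀ i, IsProbabilityMeasure (Q i)]
    (P : Measure (∀ i, X i)) [IsProbabilityMeasure P]
    (c : Finset (Fin n) → ℝ) (hc : ∀ S, 0 ≤ c S)
    (hci : ∀ i : Fin n,
      ∑ S ∈ Finset.univ.filter (fun S : Finset (Fin n) => i ∈ S), c S ≤ 1) :
    ∑ S : Finset (Fin n), ENNReal.ofReal (c S) * KLdiv (marginal P S) (marginal (Measure.pi Q) S)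
      ≤ KLdiv P (Measure.pi Q) :=
  shearer_relative_entropy_general Q P c hc hci
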